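/- There exist probability vectors p, q ∈ Prob(8), namely p = (16,4,4,4,4,4,0,0)/36 and q = (8,8,8,8,1,1,1,1)/36, such that H_α(p) < H_α(q) for every α ∈ [0,∞], yet neither p ≻ q nor q ≻ p. Hence Rényi entropies form an incomplete family of majorization monotones. -/

import Mathlib

/-!
With `t = 2 ^ α` one has `36 ^ α ∑ pᵢ ^ α = t⁴ + 5t²` and `36 ^ α ∑ qᵢ ^ α = 4t³ + 4`, whose
difference factors as `(t - 2) (t (t - 1)² + 2)`. So `∑ pᵢ ^ α - ∑ qᵢ ^ α` has the sign of `α - 1`,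
which is exactly what `H_α(p) < H_α(q)` requires on either side of `α = 1`; the limiting
entropies `H₀, H₁, H_∞` are computed directly. Majorization fails both ways: the largest entry of
`p` exceeds that of `q`, while the four largest entries of `q` sum to `32/36 > 28/36`.
-/

/-- The sum of the `k` largest entries of `r`. -/
noncomputable def topSum {n : ℕ} (r : Fin n → ℝ) (k : ℕ) : ℝ :=
  sSup {x : ℝ | ∃ s : Finset (Fin n), s.card = k ∧ x = ∑ i ∈ s, r i}

/-- Majorization. -/
def MajP {n : ℕ} (p q : Fin n → ℝ) : Prop :=
  (∀ k : ℕ, k ≤ n → topSum q k ≤ topSum p k) ∧ topSum p n = topSum q n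

/-- A probability vector in `ℝⁿ`. -/
def ProbVec {n : ℕ} (p : Fin n → ℝ) : Prop :=
  (∀ i, 0 ≤ p i) ∧ ∑ i, p i = 1

/-- The α-Rényi entropy (logarithm base 2), for `α ≠ 0, 1, ∞`. -/
noncomputable def renyiEntropy {n : ℕ} (α : ℝ) (p : Fin n → ℝ) : ℝ :=
  (1 / (1 - α)) * Real.logb 2 (∑ x, p x ^ α)

/-- The max- (Hartley) entropy `H₀`. -/
noncomputable def hartleyEntropy {n : ℕ} (p : Fin n → ℝ) : ℝ :=
  Real.logb 2 ((Finset.univ.filter fun x => p x ≠ 0).card)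

/-- The Shannon entropy `H₁` (with the convention `0 log 0 = 0`). -/
noncomputable def shannonEntropy {n : ℕ} (p : Fin n → ℝ) : ℝ :=
  ∑ x, -(p x * Real.logb 2 (p x))

/-- The min-entropy `H_∞`. -/
noncomputable def minEntropy {n : ℕ} (p : Fin n → ℝ) : ℝ :=
  -Real.logb 2 (sSup (Set.range p))

section TopSum

variable {n : ℕ}

theorem topSum_le_of_forall_sum_le {r : Fin n → ℝ} {k : ℕ} {c : ℝ} (hk : k ≤ n)
    (h : ∀ s : Finset (Fin n), s.card = k → ∑ i ∈ s, r i ≤ c) : topSum r k ≤ c := by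
  obtain ⟨s, -, hs⟩ :=
    Finset.exists_subset_card_eq (s := (Finset.univ : Finset (Fin n))) (by simpa using hk)
  refine csSup_le ⟨_, s, hs, rfl⟩ ?_
  rintro x ⟨s, hs, rfl⟩
  exact h s hs

theorem sum_le_topSum (r : Fin n → ℝ) (s : Finset (Fin n)) : ∑ i ∈ s, r i ≤ topSum r s.card := by
  refine le_csSup ?_ ⟨s, rfl, rfl⟩
  refine ((Set.finite_range fun t : Finset (Fin n) => ∑ i ∈ t, r i).subset ?_).bddAbove
  rintro x ⟨t, -, rfl⟩
  exact ⟨t, rfl⟩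

theorem topSum_le_of_le_add_single {r : Fin n → ℝ} {k : ℕ} {b c : ℝ} (i₀ : Fin n) (hc : 0 ≤ c)
    (hr : ∀ i, r i ≤ b + (Pi.single i₀ c : Fin n → ℝ) i) (hk : k ≤ n) :
    topSum r k ≤ k * b + c := by
  refine topSum_le_of_forall_sum_le hk fun s hs => ?_
  calc ∑ i ∈ s, r i ≤ ∑ i ∈ s, (b + (Pi.single i₀ c : Fin n → ℝ) i) :=
        Finset.sum_le_sum fun i _ => hr i
    _ = k * b + if i₀ ∈ s then c else 0 := by
      rw [Finset.sum_add_distrib, Finset.sum_const, Finset.sum_pi_single', hs, nsmul_eq_mul]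
    _ ≤ k * b + c := by split_ifs <;> linarith

theorem not_majP_of_topSum_lt {p q : Fin n → ℝ} {k : ℕ} (hk : k ≤ n)
    (h : topSum p k < topSum q k) : ¬MajP p q :=
  fun hpq => (hpq.1 k hk).not_gt h

end TopSum

section Renyi

variable {n : ℕ} {α : ℝ} {p q : Fin n → ℝ}

theorem renyiEntropy_lt_of_lt_one (hα : α < 1) (hp : 0 < ∑ x, p x ^ α)
    (h : ∑ x, p x ^ α < ∑ x, q x ^ α) : renyiEntropy α p < renyiEntropy α q :=
  mul_lt_mul_of_pos_left (Real.logb_lt_logb one_lt_two hp h) (by simpa using hα)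

theorem renyiEntropy_lt_of_one_lt (hα : 1 < α) (hq : 0 < ∑ x, q x ^ α)
    (h : ∑ x, q x ^ α < ∑ x, p x ^ α) : renyiEntropy α p < renyiEntropy α q :=
  mul_lt_mul_of_neg_left (Real.logb_lt_logb one_lt_two hq h) (by simpa using hα)

end Renyi

theorem div_rpow_of_eq_two_pow {x c : ℝ} {k : ℕ} (hx : x = 2 ^ k) (hc : 0 ≤ c) (α : ℝ) :
    (x / c) ^ α = (2 ^ α) ^ k / c ^ α := by
  rw [hx, Real.div_rpow (by positivity) hc, ← Real.rpow_natCast_mul zero_le_two, mul_comm,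
    Real.rpow_mul_natCast zero_le_two]

theorem logb_two_div_of_eq_two_pow {x c : ℝ} {k : ℕ} (hx : x = 2 ^ k) (hc : c ≠ 0) :
    Real.logb 2 (x / c) = k - Real.logb 2 c := by
  rw [hx, Real.logb_div (by positivity) hc, Real.logb_pow, Real.logb_self_eq_one one_lt_two,
    mul_one]

theorem sSup_range_eq_of_forall_le {ι α : Type*} [ConditionallyCompleteLattice α] {p : ι → α}
    (j : ι) (h : ∀ i, p i ≤ p j) :
    sSup (Set.range p) = p j :=
  IsGreatest.csSup_eq ⟨Set.mem_range_self j, by rintro _ ⟨i, rfl⟩; exact h i⟩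

noncomputable def pWitness : Fin 8 → ℝ := ![16 / 36, 4 / 36, 4 / 36, 4 / 36, 4 / 36, 4 / 36, 0, 0]

noncomputable def qWitness : Fin 8 → ℝ :=
  ![8 / 36, 8 / 36, 8 / 36, 8 / 36, 1 / 36, 1 / 36, 1 / 36, 1 / 36]

theorem probVec_pWitness : ProbVec pWitness :=
  ⟨fun i => by fin_cases i <;> norm_num [pWitness], by norm_num [pWitness, Fin.sum_univ_succ]⟩

theorem probVec_qWitness : ProbVec qWitness :=
  ⟨fun i => by fin_cases i <;> norm_num [qWitness], by norm_num [qWitness, Fin.sum_univ_succ]⟩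

theorem sum_rpow_pWitness {α : ℝ} (hα : 0 < α) :
    ∑ x, pWitness x ^ α = ((2 ^ α) ^ 4 + 5 * (2 ^ α) ^ 2) / 36 ^ α := by
  have h16 := div_rpow_of_eq_two_pow (x := 16) (k := 4) (c := 36) (by norm_num) (by norm_num) α
  have h4 := div_rpow_of_eq_two_pow (x := 4) (k := 2) (c := 36) (by norm_num) (by norm_num) α
  simp only [pWitness, Fin.sum_univ_succ, Fin.sum_univ_zero, Matrix.cons_val_zero,
    Matrix.cons_val_succ, h16, h4, Real.zero_rpow hα.ne']
  ring

theorem sum_rpow_qWitness (α : ℝ) :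
    ∑ x, qWitness x ^ α = (4 * (2 ^ α) ^ 3 + 4) / 36 ^ α := by
  have h8 := div_rpow_of_eq_two_pow (x := 8) (k := 3) (c := 36) (by norm_num) (by norm_num) α
  have h1 := div_rpow_of_eq_two_pow (x := 1) (k := 0) (c := 36) (by norm_num) (by norm_num) α
  simp only [qWitness, Fin.sum_univ_succ, Fin.sum_univ_zero, Matrix.cons_val_zero,
    Matrix.cons_val_succ, h8, h1]
  ring

theorem sum_rpow_pWitness_sub_qWitness {α : ℝ} (hα : 0 < α) :
    ∑ x, pWitness x ^ α - ∑ x, qWitness x ^ α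
      = (2 ^ α - 2) * (2 ^ α * (2 ^ α - 1) ^ 2 + 2) / 36 ^ α := by
  rw [sum_rpow_pWitness hα, sum_rpow_qWitness]
  ring

theorem renyiEntropy_pWitness_lt {α : ℝ} (hα : 0 < α) (hα1 : α ≠ 1) :
    renyiEntropy α pWitness < renyiEntropy α qWitness := by
  have hsub := sum_rpow_pWitness_sub_qWitness hα
  have hpos : 0 < (2 : ℝ) ^ α * (2 ^ α - 1) ^ 2 + 2 := by positivity
  have hp : 0 < ∑ x, pWitness x ^ α := by rw [sum_rpow_pWitness hα]; positivity
  have hq : 0 < ∑ x, qWitness x ^ α := by rw [sum_rpow_qWitness]; positivity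
  rcases hα1.lt_or_gt with hlt | hgt
  · have h2 : (2 : ℝ) ^ α < 2 := by
      simpa using (Real.rpow_lt_rpow_left_iff one_lt_two).mpr hlt
    refine renyiEntropy_lt_of_lt_one hlt hp (sub_neg.mp ?_)
    rw [hsub]
    exact div_neg_of_neg_of_pos (mul_neg_of_neg_of_pos (by linarith) hpos) (by positivity)
  · have h2 : 2 < (2 : ℝ) ^ α := by
      simpa using (Real.rpow_lt_rpow_left_iff one_lt_two).mpr hgt
    refine renyiEntropy_lt_of_one_lt hgt hq (sub_pos.mp ?_)
    rw [hsub]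
    exact div_pos (mul_pos (by linarith) hpos) (by positivity)

theorem hartleyEntropy_pWitness : hartleyEntropy pWitness = Real.logb 2 6 := by
  rw [hartleyEntropy, Finset.card_filter]
  norm_num [Fin.sum_univ_succ, pWitness]

theorem hartleyEntropy_qWitness : hartleyEntropy qWitness = Real.logb 2 8 := by
  rw [hartleyEntropy, Finset.card_filter]
  norm_num [Fin.sum_univ_succ, qWitness]

theorem shannonEntropy_pWitness : shannonEntropy pWitness = Real.logb 2 36 - 26 / 9 := by
  have h16 := logb_two_div_of_eq_two_pow (x := 16) (k := 4) (c := 36) (by norm_num) (by norm_num)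
  have h4 := logb_two_div_of_eq_two_pow (x := 4) (k := 2) (c := 36) (by norm_num) (by norm_num)
  simp only [shannonEntropy, pWitness, Fin.sum_univ_succ, Fin.sum_univ_zero,
    Matrix.cons_val_zero, Matrix.cons_val_succ, h16, h4]
  ring

theorem shannonEntropy_qWitness : shannonEntropy qWitness = Real.logb 2 36 - 8 / 3 := by
  have h8 := logb_two_div_of_eq_two_pow (x := 8) (k := 3) (c := 36) (by norm_num) (by norm_num)
  have h1 := logb_two_div_of_eq_two_pow (x := 1) (k := 0) (c := 36) (by norm_num) (by norm_num)
  simp only [shannonEntropy, qWitness, Fin.sum_univ_succ, Fin.sum_univ_zero,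
    Matrix.cons_val_zero, Matrix.cons_val_succ, h8, h1]
  ring

theorem minEntropy_pWitness : minEntropy pWitness = -Real.logb 2 (16 / 36) := by
  rw [minEntropy, sSup_range_eq_of_forall_le 0 fun i => by fin_cases i <;> norm_num [pWitness]]
  rfl

theorem minEntropy_qWitness : minEntropy qWitness = -Real.logb 2 (8 / 36) := by
  rw [minEntropy, sSup_range_eq_of_forall_le 0 fun i => by fin_cases i <;> norm_num [qWitness]]
  rfl

theorem topSum_pWitness_four_le : topSum pWitness 4 ≤ 28 / 36 :=
  (topSum_le_of_le_add_single (b := 4 / 36) 0 (by norm_num : (0 : ℝ) ≤ 12 / 36)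
    (fun i => by fin_cases i <;> norm_num [pWitness]) (by norm_num)).trans_eq (by norm_num)

theorem topSum_qWitness_four_ge : 32 / 36 ≤ topSum qWitness 4 :=
  calc 32 / 36 = ∑ i ∈ {0, 1, 2, 3}, qWitness i := by
        rw [Finset.sum_insert (by decide), Finset.sum_insert (by decide),
          Finset.sum_insert (by decide), Finset.sum_singleton]
        simp only [qWitness, Matrix.cons_val]
        norm_num
    _ ≤ topSum qWitness 4 := sum_le_topSum qWitness {0, 1, 2, 3}

theorem topSum_qWitness_one_le : topSum qWitness 1 ≤ 8 / 36 :=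
  (topSum_le_of_le_add_single (b := 8 / 36) 0 le_rfl
    (fun i => by fin_cases i <;> norm_num [qWitness]) (by norm_num)).trans_eq (by norm_num)

theorem topSum_pWitness_one_ge : 16 / 36 ≤ topSum pWitness 1 := by
  simpa [pWitness] using sum_le_topSum pWitness {0}

/-- Rényi entropies are an incomplete family of majorization monotones:
`p = (16,4,4,4,4,4,0,0)/36` and `q = (8,8,8,8,1,1,1,1)/36` satisfy
`H_α(p) < H_α(q)` for all `α ∈ [0,∞]`, yet neither majorizes the other. -/
theorem renyi_incomplete :
    ∃ p q : Fin 8 → ℝ,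
      p = ![16 / 36, 4 / 36, 4 / 36, 4 / 36, 4 / 36, 4 / 36, 0, 0] ∧
      q = ![8 / 36, 8 / 36, 8 / 36, 8 / 36, 1 / 36, 1 / 36, 1 / 36, 1 / 36] ∧
      ProbVec p ∧ ProbVec q ∧
      (∀ α : ℝ, 0 < α → α ≠ 1 → renyiEntropy α p < renyiEntropy α q) ∧
      hartleyEntropy p < hartleyEntropy q ∧
      shannonEntropy p < shannonEntropy q ∧
      minEntropy p < minEntropy q ∧
      ¬MajP p q ∧ ¬MajP q p := by
  refine ⟨pWitness, qWitness, rfl, rfl, probVec_pWitness, probVec_qWitness,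
    fun α hα hα1 => renyiEntropy_pWitness_lt hα hα1, ?_, ?_, ?_, ?_, ?_⟩
  · rw [hartleyEntropy_pWitness, hartleyEntropy_qWitness]
    exact Real.logb_lt_logb one_lt_two (by norm_num) (by norm_num)
  · rw [shannonEntropy_pWitness, shannonEntropy_qWitness]
    norm_num
  · rw [minEntropy_pWitness, minEntropy_qWitness, neg_lt_neg_iff]
    exact Real.logb_lt_logb one_lt_two (by norm_num) (by norm_num)
  · exact not_majP_of_topSum_lt (k := 4) (by norm_num)
      (topSum_pWitness_four_le.trans_lt (by norm_num) |>.trans_le topSum_qWitness_four_ge)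
  · exact not_majP_of_topSum_lt (k := 1) (by norm_num)
      (topSum_qWitness_one_le.trans_lt (by norm_num) |>.trans_le topSum_pWitness_one_ge)
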